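/- If the homographic map D(h) = (ah+b)(ch+d)⁻¹ (a,b,c,d ∈ ℍ, ad - bc invertible) is defined at two double numbers h₁, h₂ lying on a common cone (i.e., h₁ - h₂ is a zero divisor or zero), then D(h₁) - D(h₂) is also a zero divisor or zero; i.e., homographic maps send cones into cones. -/

import Mathlib

noncomputable section

/-- Double numbers ℝ[j]/(j²-1), modeled as ℝ × ℝ with componentwise operations. -/
abbrev DoubleNum := ℝ × ℝ

/-- The hyperbolic imaginary unit `j`, satisfying `j * j = 1`. -/
def jd : DoubleNum := (1, -1)

/-- The double number `t + j·x`. -/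
def hmk (t x : ℝ) : DoubleNum := t • (1 : DoubleNum) + x • jd

/-- Conjugation: `t + j·x ↦ t - j·x`. -/
def hconj (h : DoubleNum) : DoubleNum := (h.2, h.1)

/-- Real part of a double number. -/
def hre (h : DoubleNum) : ℝ := (h.1 + h.2) / 2

/-- Imaginary part of a double number. -/
def him (h : DoubleNum) : ℝ := (h.1 - h.2) / 2


/-- The homographic map `h ↦ (a h + b) (c h + d)⁻¹` on double numbers. -/
def homog (a b c d : DoubleNum) (h : DoubleNum) : DoubleNum :=
  (a * h + b) * (c * h + d)⁻¹

/-! By the key identity `D(h₁) - D(h₂) = (ad - bc)(h₁ - h₂)(ch₁ + d)⁻¹(ch₂ + d)⁻¹` it suffices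
that the modulus `h ↦ h h̄` is multiplicative: conjugation is a ring automorphism (it swaps the two
idempotent coordinates of `ℝ × ℝ`), so a product with a factor of modulus zero has modulus zero. -/

theorem mul_inv_sub_mul_inv_eq {R : Type*} [CommRing R] {a b c d h₁ h₂ u₁ u₂ : R}
    (hu₁ : (c * h₁ + d) * u₁ = 1) (hu₂ : (c * h₂ + d) * u₂ = 1) :
    (a * h₁ + b) * u₁ - (a * h₂ + b) * u₂ = (a * d - b * c) * (h₁ - h₂) * u₁ * u₂ := by
  linear_combination (a * h₂ + b) * u₂ * hu₁ - (a * h₁ + b) * u₁ * hu₂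

theorem homog_sub_homog (a b c d : DoubleNum) {h₁ h₂ : DoubleNum}
    (hu₁ : IsUnit (c * h₁ + d)) (hu₂ : IsUnit (c * h₂ + d)) :
    homog a b c d h₁ - homog a b c d h₂ =
      (a * d - b * c) * (h₁ - h₂) * (c * h₁ + d)⁻¹ * (c * h₂ + d)⁻¹ :=
  mul_inv_sub_mul_inv_eq hu₁.mul_inv_cancel hu₂.mul_inv_cancel

theorem hconj_mul (x y : DoubleNum) : hconj (x * y) = hconj x * hconj y :=
  map_mul (RingEquiv.prodComm : DoubleNum ≃+* DoubleNum) x y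

theorem mul_hconj_mul (x y : DoubleNum) :
    x * y * hconj (x * y) = x * hconj x * (y * hconj y) := by
  rw [hconj_mul]
  ring

theorem double_homog_preserves_cones_general (a b c d : DoubleNum)
    (h₁ h₂ : DoubleNum)
    (hu1 : IsUnit (c * h₁ + d)) (hu2 : IsUnit (c * h₂ + d))
    (hz : (h₁ - h₂) * hconj (h₁ - h₂) = 0) :
    (homog a b c d h₁ - homog a b c d h₂) *
      hconj (homog a b c d h₁ - homog a b c d h₂) = 0 := by
  rw [homog_sub_homog a b c d hu1 hu2, mul_hconj_mul, mul_hconj_mul, mul_hconj_mul, hz]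
  simp only [mul_zero, zero_mul]

/-- Homographic maps send cones into cones: if `h₁ - h₂` has zero hyperbolic
squared modulus (is zero or a zero divisor), then so does `D(h₁) - D(h₂)`. -/
theorem double_homog_preserves_cones (a b c d : DoubleNum)
    (hdet : IsUnit (a * d - b * c)) (h₁ h₂ : DoubleNum)
    (hu1 : IsUnit (c * h₁ + d)) (hu2 : IsUnit (c * h₂ + d))
    (hz : (h₁ - h₂) * hconj (h₁ - h₂) = 0) :
    (homog a b c d h₁ - homog a b c d h₂) *
      hconj (homog a b c d h₁ - homog a b c d h₂) = 0 :=
  double_homog_preserves_cones_general a b c d h₁ h₂ hu1 hu2 hz
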